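/- arXiv:2407.17742 — 3 statements merged into one kernel-verified Lean document; each statement's English description precedes it below -/
import Mathlib

section
/- Let τ > 0 and τ' > 0 and let t₋₂ < t₋₁ < t₀ < t₁ be real time nodes with steps k₁ = t₁ − t₀, k₀ = t₀ − t₋₁, k₋₁ = t₋₁ − t₋₂ satisfying k₁/k₀ = τ and k₀/k₋₁ = τ'. Then for every real polynomial p of degree at most 2, σ₃·p(t₀) + σ₂·(p(t₀) − p(t₋₁)) − σ₁·(p(t₋₁) − p(t₋₂)) = p(t₁); that is, the extrapolation w_σⁿ used on the interface terms of the BDF2-TF scheme reproduces quadratic polynomials exactly at t₁ (third-order extrapolation). -/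
/-- BDF2-TF extrapolation coefficients. -/
noncomputable def sigma3 (τ τ' : ℝ) : ℝ := 1
noncomputable def sigma2 (τ τ' : ℝ) : ℝ := τ * (1 + τ' * (2 + τ)) / (1 + τ')
noncomputable def sigma1 (τ τ' : ℝ) : ℝ := τ * τ' ^ 2 * (1 + τ) / (1 + τ')

/-- The extrapolation `w_σⁿ` used on the interface terms of the BDF2-TF scheme
reproduces quadratic polynomials exactly at `t₁` (third-order extrapolation). -/
theorem bdf2tf_sigma_extrapolation_exact_on_quadratics
    (τ τ' : ℝ) (hτ : 0 < τ) (hτ' : 0 < τ')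
    (tm2 tm1 t0 t1 : ℝ) (h1 : tm2 < tm1) (h2 : tm1 < t0) (h3 : t0 < t1)
    (k1 k0 km1 : ℝ) (hk1 : k1 = t1 - t0) (hk0 : k0 = t0 - tm1) (hkm1 : km1 = tm1 - tm2)
    (hr1 : k1 / k0 = τ) (hr2 : k0 / km1 = τ')
    (p : Polynomial ℝ) (hp : p.degree ≤ 2) :
    sigma3 τ τ' * p.eval t0 + sigma2 τ τ' * (p.eval t0 - p.eval tm1)
      - sigma1 τ τ' * (p.eval tm1 - p.eval tm2) = p.eval t1 := by
  have hd : p.natDegree < 3 := by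
    have := Polynomial.natDegree_le_iff_degree_le.mpr hp
    exact lt_of_le_of_lt this (by norm_num)
  have heval : ∀ x : ℝ, p.eval x = p.coeff 0 + p.coeff 1 * x + p.coeff 2 * x ^ 2 := by
    intro x
    rw [Polynomial.eval_eq_sum_range' hd]
    simp [Finset.sum_range_succ]
  have hk0' : (0:ℝ) < t0 - tm1 := by linarith
  have hkm1' : (0:ℝ) < tm1 - tm2 := by linarith
  have e1 : t1 - t0 = τ * (t0 - tm1) := by
    field_simp [hk1, hk0, ne_of_gt hk0'] at hr1
    rw [hk1, hk0] at hr1; linarith [hr1]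
  have e2 : t0 - tm1 = τ' * (tm1 - tm2) := by
    field_simp [hk0, hkm1, ne_of_gt hkm1'] at hr2
    rw [hk0, hkm1] at hr2; linarith [hr2]
  have ht0 : t0 = tm1 + τ' * (tm1 - tm2) := by linarith
  have ht1 : t1 = t0 + τ * (t0 - tm1) := by linarith
  have hτ'1 : (1:ℝ) + τ' ≠ 0 := by positivity
  simp only [sigma3, sigma2, sigma1, heval]
  field_simp
  rw [ht1, ht0]
  ring
end

section
/- For every τ > 0 and τ' > 0 there exists a constant C > 0 (depending only on τ and τ') with the following property: for all real time nodes t₋₂ < t₋₁ < t₀ < t₁ with steps k₁ = t₁ − t₀, k₀ = t₀ − t₋₁, k₋₁ = t₋₁ − t₋₂ satisfying k₁/k₀ = τ and k₀/k₋₁ = τ', and every three-times continuously differentiable function u : ℝ → E into a real Hilbert space E, one has ‖(u(t₁) + γ₃(u(t₁) − u(t₀)) − γ₂(u(t₀) − u(t₋₁)) + γ₁(u(t₋₁) − u(t₋₂))) − (u(t₀) + σ₂(u(t₀) − u(t₋₁)) − σ₁(u(t₋₁) − u(t₋₂)))‖² ≤ C · k₁⁵ · ∫_{t₋₂}^{t₁}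 ‖u'''(t)‖² dt, where u''' denotes the third derivative of u. (This is the consistency estimate for the difference ûⁿ⁺¹ − u_σⁿ, Lemma 3 third inequality.) -/
/-- BDF2-TF γ-coefficients. -/
noncomputable def gamma3 (τ τ' : ℝ) : ℝ :=
  τ * τ' * (1 + τ) / ((1 + 2 * τ) * (1 + τ' * (1 + τ)))
noncomputable def gamma2 (τ τ' : ℝ) : ℝ :=
  τ ^ 2 * τ' * (1 + τ) * (1 + τ' * (2 + τ)) /
    ((1 + 2 * τ) * (1 + τ') * (1 + τ' * (1 + τ)))
noncomputable def gamma1 (τ τ' : ℝ) : ℝ :=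
  τ ^ 2 * τ' ^ 3 * (1 + τ) ^ 2 / ((1 + 2 * τ) * (1 + τ') * (1 + τ' * (1 + τ)))

open MeasureTheory intervalIntegral Set

/-- Taylor expansion of order 2 with integral remainder. -/
lemma taylor3 {E : Type*} [NormedAddCommGroup E] [NormedSpace ℝ E] [CompleteSpace E]
    (u : ℝ → E) (hu : ContDiff ℝ 3 u) (a x : ℝ) :
    u x = u a + (x - a) • deriv u a + ((x - a) ^ 2 / 2) • iteratedDeriv 2 u a
        + ∫ s in a..x, ((x - s) ^ 2 / 2) • iteratedDeriv 3 u s := by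
  have hd1 : Differentiable ℝ u := hu.differentiable (by norm_num)
  have hd2 : Differentiable ℝ (iteratedDeriv 1 u) :=
    hu.differentiable_iteratedDeriv 1 (by norm_num)
  have hd3 : Differentiable ℝ (iteratedDeriv 2 u) :=
    hu.differentiable_iteratedDeriv 2 (by norm_num)
  have hg : ∀ s : ℝ, HasDerivAt
      (fun s => u s + (x - s) • deriv u s + ((x - s) ^ 2 / 2) • iteratedDeriv 2 u s)
      (((x - s) ^ 2 / 2) • iteratedDeriv 3 u s) s := by
    intro s
    have h0 : HasDerivAt u (deriv u s) s := (hd1 s).hasDerivAt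
    have h1 : HasDerivAt (deriv u) (iteratedDeriv 2 u s) s := by
      have := (hd2 s).hasDerivAt
      rw [← iteratedDeriv_succ] at this
      simpa [iteratedDeriv_one] using this
    have h2 : HasDerivAt (iteratedDeriv 2 u) (iteratedDeriv 3 u s) s := by
      have := (hd3 s).hasDerivAt
      rwa [← iteratedDeriv_succ] at this
    have hc1 : HasDerivAt (fun s : ℝ => x - s) (-1) s := by
      simpa using (hasDerivAt_id s).const_sub x
    have hc2 : HasDerivAt (fun s : ℝ => (x - s) ^ 2 / 2) (-(x - s)) s := by
      have := (hc1.fun_pow 2).div_const 2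
      refine this.congr_deriv ?_
      norm_num
      ring
    have := (h0.fun_add (hc1.fun_smul h1)).fun_add (hc2.fun_smul h2)
    convert this using 1
    module
  have hint : IntervalIntegrable
      (fun s => ((x - s) ^ 2 / 2) • iteratedDeriv 3 u s) volume a x := by
    apply Continuous.intervalIntegrable
    exact (by fun_prop : Continuous fun s : ℝ => (x - s) ^ 2 / 2).smul
      (hu.continuous_iteratedDeriv 3 (by norm_num))
  have := intervalIntegral.integral_eq_sub_of_hasDerivAt (fun s _ => hg s) hint
  rw [this]
  simp

/-- Cauchy-Schwarz for interval integrals of nonneg continuous functions. -/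
lemma cs_int (a b : ℝ) (hab : a ≤ b) (g : ℝ → ℝ) (hg : Continuous g) (hgn : ∀ x, 0 ≤ g x) :
    (∫ t in a..b, g t) ^ 2 ≤ (b - a) * ∫ t in a..b, g t ^ 2 := by
  have hμ : (volume.restrict (Ioc a b)) Set.univ < ⊤ := by
    simp [Real.volume_Ioc]
  have hone : MemLp (fun _ : ℝ => (1 : ℝ)) 2 (volume.restrict (Ioc a b)) := by
    haveI : IsFiniteMeasure (volume.restrict (Ioc a b)) := ⟨hμ⟩
    exact memLp_const (μ := volume.restrict (Ioc a b)) 1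
  have hgm : MemLp g 2 (volume.restrict (Ioc a b)) := by
    rw [memLp_two_iff_integrable_sq hg.aestronglyMeasurable]
    have h2 : IntegrableOn (fun x => g x ^ 2) (Icc a b) volume := (hg.pow 2).integrableOn_Icc
    exact h2.mono_set Ioc_subset_Icc_self
  have hpq : Real.HolderConjugate 2 2 := Real.holderConjugate_iff.mpr ⟨by norm_num, by norm_num⟩
  have H := MeasureTheory.integral_mul_le_Lp_mul_Lq_of_nonneg hpq
    (f := fun _ => (1:ℝ)) (g := g) (Filter.Eventually.of_forall fun _ => zero_le_one)
    (Filter.Eventually.of_forall fun x => hgn x) (by simpa using hone) (by simpa using hgm)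
  simp only [one_mul] at H
  rw [intervalIntegral.integral_of_le hab, intervalIntegral.integral_of_le hab]
  have hI1 : (0:ℝ) ≤ ∫ t in Ioc a b, g t := setIntegral_nonneg measurableSet_Ioc fun x _ => hgn x
  have hI2 : (0:ℝ) ≤ ∫ t in Ioc a b, g t ^ 2 := setIntegral_nonneg measurableSet_Ioc
    fun x _ => sq_nonneg _
  have hvol : ∫ _ in Ioc a b, ((1:ℝ)) ^ (2:ℝ) = b - a := by
    simp [Real.volume_Ioc, ENNReal.toReal_ofReal (sub_nonneg.mpr hab), hab]
  have e1 : (∫ t in Ioc a b, g t ^ (2:ℝ)) = ∫ t in Ioc a b, g t ^ 2 := by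
    apply MeasureTheory.integral_congr_ae
    filter_upwards with x
    rw [← Real.rpow_natCast (g x) 2]
    norm_num
  rw [hvol, e1] at H
  calc (∫ t in Ioc a b, g t) ^ 2 ≤ ((b - a) ^ ((1:ℝ)/2) * (∫ t in Ioc a b, g t ^ 2) ^ ((1:ℝ)/2)) ^ 2 := by
        apply pow_le_pow_left₀ hI1 H
    _ = (b - a) * ∫ t in Ioc a b, g t ^ 2 := by
        rw [mul_pow, ← Real.rpow_natCast ((b-a) ^ ((1:ℝ)/2)) 2,
          ← Real.rpow_natCast ((∫ t in Ioc a b, g t ^ 2) ^ ((1:ℝ)/2)) 2,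
          ← Real.rpow_mul (sub_nonneg.mpr hab), ← Real.rpow_mul hI2]
        norm_num

set_option maxHeartbeats 2000000 in
/-- Consistency estimate for the difference `ûⁿ⁺¹ − u_σⁿ`
(Lemma 3, third inequality). -/
theorem bdf2tf_consistency_hat_minus_sigma (τ τ' : ℝ) (hτ : 0 < τ) (hτ' : 0 < τ') :
    ∃ C > 0, ∀ (E : Type) (_ : NormedAddCommGroup E) (_ : InnerProductSpace ℝ E)
      (_ : CompleteSpace E),
      ∀ (tm2 tm1 t0 t1 : ℝ), tm2 < tm1 → tm1 < t0 → t0 < t1 →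
      ∀ (k1 k0 km1 : ℝ), k1 = t1 - t0 → k0 = t0 - tm1 → km1 = tm1 - tm2 →
      k1 / k0 = τ → k0 / km1 = τ' →
      ∀ u : ℝ → E, ContDiff ℝ 3 u →
      ‖(u t1 + gamma3 τ τ' • (u t1 - u t0) - gamma2 τ τ' • (u t0 - u tm1)
            + gamma1 τ τ' • (u tm1 - u tm2))
          - (u t0 + sigma2 τ τ' • (u t0 - u tm1) - sigma1 τ τ' • (u tm1 - u tm2))‖ ^ 2
        ≤ C * k1 ^ 5 * ∫ t in tm2..t1, ‖iteratedDeriv 3 u t‖ ^ 2 := by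
  set M : ℝ := |1 + gamma3 τ τ'| + |1 + gamma3 τ τ' + gamma2 τ τ' + sigma2 τ τ'|
    + |gamma2 τ τ' + gamma1 τ τ' + sigma2 τ τ' + sigma1 τ τ'| with hM
  set ρ : ℝ := 1 + 1/τ + 1/(τ*τ') with hρ
  have hρpos : 0 < ρ := by positivity
  refine ⟨M^2/4 * ρ^5 + 1, by positivity, ?_⟩
  intro E _ _ _ tm2 tm1 t0 t1 h21 h10 h01 k1 k0 km1 hk1 hk0 hkm1 hr1 hr0 u hu
  -- step relations
  have hkm1pos : 0 < km1 := by rw [hkm1]; linarith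
  have hk0' : k0 = τ' * km1 := by
    field_simp at hr0
    linarith [hr0]
  have hk0pos : 0 < k0 := by rw [hk0']; positivity
  have hk1' : k1 = τ * k0 := by
    field_simp at hr1
    linarith [hr1]
  have hk1pos : 0 < k1 := by rw [hk1']; positivity
  -- coordinates
  have em1 : tm1 = tm2 + km1 := by rw [hkm1]; ring
  have e0 : t0 = tm2 + (1 + τ') * km1 := by
    have : t0 = tm1 + k0 := by rw [hk0]; ring
    rw [this, em1, hk0']; ring
  have e1 : t1 = tm2 + (1 + τ' + τ * τ') * km1 := by
    have : t1 = t0 + k1 := by rw [hk1]; ring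
    rw [this, e0, hk1', hk0']; ring
  have hL : t1 - tm2 = ρ * k1 := by
    rw [e1, hk1', hk0', hρ]
    field_simp
    ring
  set L : ℝ := t1 - tm2 with hLdef
  have hLpos : 0 < L := by rw [hLdef]; linarith
  have h2le1 : tm2 ≤ t1 := by linarith
  -- denominators nonzero
  have hd1 : (1:ℝ) + τ' ≠ 0 := by positivity
  have hd2 : (1:ℝ) + 2*τ ≠ 0 := by positivity
  have hd3 : (1:ℝ) + τ' * (1 + τ) ≠ 0 := by positivity
  have hτne : τ ≠ 0 := ne_of_gt hτ
  have hτ'ne : τ' ≠ 0 := ne_of_gt hτ'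
  have hkmne : km1 ≠ 0 := ne_of_gt hkm1pos
  -- Taylor remainder
  set R : ℝ → E := fun x => ∫ s in tm2..x, ((x - s) ^ 2 / 2) • iteratedDeriv 3 u s with hR
  have hT : ∀ x, u x = u tm2 + (x - tm2) • deriv u tm2
      + ((x - tm2) ^ 2 / 2) • iteratedDeriv 2 u tm2 + R x := fun x => taylor3 u hu tm2 x
  have key : (u t1 + gamma3 τ τ' • (u t1 - u t0) - gamma2 τ τ' • (u t0 - u tm1)
            + gamma1 τ τ' • (u tm1 - u tm2))
          - (u t0 + sigma2 τ τ' • (u t0 - u tm1) - sigma1 τ τ' • (u tm1 - u tm2))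
      = (1 + gamma3 τ τ') • R t1
        - (1 + gamma3 τ τ' + gamma2 τ τ' + sigma2 τ τ') • R t0
        + (gamma2 τ τ' + gamma1 τ τ' + sigma2 τ τ' + sigma1 τ τ') • R tm1 := by
    rw [hT t1, hT t0, hT tm1, hT tm2]
    have hRm2 : R tm2 = 0 := by rw [hR]; simp
    rw [hRm2, e1, e0, em1]
    match_scalars
    all_goals (
      simp only [gamma1, gamma2, gamma3, sigma1, sigma2]
      field_simp
      try ring)
  -- continuity and integrability
  have hD3 : Continuous (iteratedDeriv 3 u) := hu.continuous_iteratedDeriv 3 (by norm_num)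
  set I1 : ℝ := ∫ s in tm2..t1, ‖iteratedDeriv 3 u s‖ with hI1
  set I2 : ℝ := ∫ s in tm2..t1, ‖iteratedDeriv 3 u s‖ ^ 2 with hI2
  have hI1nn : 0 ≤ I1 :=
    intervalIntegral.integral_nonneg h2le1 fun s _ => norm_nonneg _
  have hI2nn : 0 ≤ I2 :=
    intervalIntegral.integral_nonneg h2le1 fun s _ => sq_nonneg _
  have hCS : I1 ^ 2 ≤ L * I2 := cs_int tm2 t1 h2le1 _ hD3.norm fun x => norm_nonneg _
  -- remainder bound
  have hRb : ∀ x, tm2 ≤ x → x ≤ t1 → ‖R x‖ ≤ L ^ 2 / 2 * I1 := by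
    intro x hx hx1
    have hib : IntervalIntegrable (fun s => ‖((x - s) ^ 2 / 2) • iteratedDeriv 3 u s‖)
        volume tm2 x :=
      (((by fun_prop : Continuous fun s : ℝ => (x - s) ^ 2 / 2).smul hD3).norm).intervalIntegrable _ _
    have hib2 : IntervalIntegrable (fun s => L ^ 2 / 2 * ‖iteratedDeriv 3 u s‖)
        volume tm2 x := (continuous_const.mul hD3.norm).intervalIntegrable _ _
    calc ‖R x‖ ≤ ∫ s in tm2..x, ‖((x - s) ^ 2 / 2) • iteratedDeriv 3 u s‖ :=
          intervalIntegral.norm_integral_le_integral_norm hx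
      _ ≤ ∫ s in tm2..x, L ^ 2 / 2 * ‖iteratedDeriv 3 u s‖ := by
          apply intervalIntegral.integral_mono_on hx hib hib2
          intro s hs
          rw [norm_smul, Real.norm_eq_abs, abs_of_nonneg (by positivity)]
          have h1 : (x - s) ^ 2 ≤ L ^ 2 := by
            have := hs.1; have := hs.2
            nlinarith
          gcongr
      _ = L ^ 2 / 2 * ∫ s in tm2..x, ‖iteratedDeriv 3 u s‖ := by
          rw [intervalIntegral.integral_const_mul]
      _ ≤ L ^ 2 / 2 * I1 := by
          apply mul_le_mul_of_nonneg_left _ (by positivity)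
          apply intervalIntegral.integral_mono_interval le_rfl hx hx1
          · exact Filter.Eventually.of_forall fun s => norm_nonneg _
          · exact hD3.norm.intervalIntegrable _ _
  -- norm bound
  have hnorm : ‖(u t1 + gamma3 τ τ' • (u t1 - u t0) - gamma2 τ τ' • (u t0 - u tm1)
            + gamma1 τ τ' • (u tm1 - u tm2))
          - (u t0 + sigma2 τ τ' • (u t0 - u tm1) - sigma1 τ τ' • (u tm1 - u tm2))‖
      ≤ M * (L ^ 2 / 2 * I1) := by
    rw [key]
    have b1 := hRb t1 h2le1 le_rfl
    have b0 := hRb t0 (by linarith) (by linarith)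
    have bm1 := hRb tm1 (by linarith) (by linarith)
    calc ‖(1 + gamma3 τ τ') • R t1
        - (1 + gamma3 τ τ' + gamma2 τ τ' + sigma2 τ τ') • R t0
        + (gamma2 τ τ' + gamma1 τ τ' + sigma2 τ τ' + sigma1 τ τ') • R tm1‖
        ≤ ‖(1 + gamma3 τ τ') • R t1
            - (1 + gamma3 τ τ' + gamma2 τ τ' + sigma2 τ τ') • R t0‖
          + ‖(gamma2 τ τ' + gamma1 τ τ' + sigma2 τ τ' + sigma1 τ τ') • R tm1‖ :=
          norm_add_le _ _
      _ ≤ ‖(1 + gamma3 τ τ') • R t1‖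
          + ‖(1 + gamma3 τ τ' + gamma2 τ τ' + sigma2 τ τ') • R t0‖
          + ‖(gamma2 τ τ' + gamma1 τ τ' + sigma2 τ τ' + sigma1 τ τ') • R tm1‖ := by
          have := norm_sub_le ((1 + gamma3 τ τ') • R t1)
            ((1 + gamma3 τ τ' + gamma2 τ τ' + sigma2 τ τ') • R t0)
          linarith
      _ ≤ M * (L ^ 2 / 2 * I1) := by
          simp only [norm_smul, Real.norm_eq_abs, hM]
          have a1 : (0:ℝ) ≤ |1 + gamma3 τ τ'| := abs_nonneg _
          have a0 : (0:ℝ) ≤ |1 + gamma3 τ τ' + gamma2 τ τ' + sigma2 τ τ'| := abs_nonneg _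
          have am : (0:ℝ) ≤ |gamma2 τ τ' + gamma1 τ τ' + sigma2 τ τ' + sigma1 τ τ'| := abs_nonneg _
          nlinarith [norm_nonneg (R t1), norm_nonneg (R t0), norm_nonneg (R tm1)]
  -- conclude
  calc ‖(u t1 + gamma3 τ τ' • (u t1 - u t0) - gamma2 τ τ' • (u t0 - u tm1)
            + gamma1 τ τ' • (u tm1 - u tm2))
          - (u t0 + sigma2 τ τ' • (u t0 - u tm1) - sigma1 τ τ' • (u tm1 - u tm2))‖ ^ 2
      ≤ (M * (L ^ 2 / 2 * I1)) ^ 2 := pow_le_pow_left₀ (norm_nonneg _) hnorm 2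
    _ = M ^ 2 * (L ^ 4 / 4) * I1 ^ 2 := by ring
    _ ≤ M ^ 2 * (L ^ 4 / 4) * (L * I2) := by
        apply mul_le_mul_of_nonneg_left hCS (by positivity)
    _ = M ^ 2 / 4 * ρ ^ 5 * k1 ^ 5 * I2 := by rw [hL]; ring
    _ ≤ (M ^ 2 / 4 * ρ ^ 5 + 1) * k1 ^ 5 * I2 := by
        nlinarith [pow_pos hk1pos 5]
end

section
/- For every real polynomial p of degree at most 4, every constant step k > 0, and every t ∈ ℝ, (25·p(t + k) − 48·p(t) + 36·p(t − k) − 16·p(t − 2k) + 3·p(t − 3k)) = 12k · p'(t + k), where p' is the derivative of p; that is, the effective difference operator of the constant-step BDF3-TF algorithm (which equals the BDF4 operator) is exact on quartic polynomials, which is the order-raising property behind the observed fourth-order convergence. -/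
/-!
The BDF4 residual `25 p(t+k) - 48 p(t) + 36 p(t-k) - 16 p(t-2k) + 3 p(t-3k) - 12k p'(t+k)`
is linear in `p`, so it suffices that it vanishes on the monomials `1, X, …, X⁴`, which is a
polynomial identity in `t` and `k`.
-/

open Polynomial

theorem Polynomial.linearMap_eq_zero_of_degree_lt {R M : Type*} [Semiring R] [AddCommMonoid M]
    [Module R M] {n : ℕ} (L : R[X] →ₗ[R] M) (hL : ∀ i < n, L (X ^ i) = 0) {p : R[X]}
    (hp : p.degree < n) : L p = 0 := by
  classical
  have hspan : R[X]_n ≤ LinearMap.ker L := by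
    rw [degreeLT_eq_span_X_pow, Submodule.span_le]
    intro q hq
    obtain ⟨i, hi, rfl⟩ := Finset.mem_image.mp hq
    exact hL i (Finset.mem_range.mp hi)
  exact hspan (mem_degreeLT.mpr hp)

noncomputable def bdf4Residual (k t : ℝ) : ℝ[X] →ₗ[ℝ] ℝ :=
  25 • leval (t + k) - 48 • leval t + 36 • leval (t - k) - 16 • leval (t - 2 * k)
    + 3 • leval (t - 3 * k) - (12 * k) • (leval (t + k)).comp derivative

theorem bdf4Residual_apply (k t : ℝ) (p : ℝ[X]) :
    bdf4Residual k t p = 25 * p.eval (t + k) - 48 * p.eval t + 36 * p.eval (t - k)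
      - 16 * p.eval (t - 2 * k) + 3 * p.eval (t - 3 * k)
      - 12 * k * p.derivative.eval (t + k) := by
  simp [bdf4Residual, nsmul_eq_mul]

theorem bdf4Residual_X_pow (k t : ℝ) {i : ℕ} (hi : i < 5) : bdf4Residual k t (X ^ i) = 0 := by
  rw [bdf4Residual_apply]
  interval_cases i <;>
    simp only [derivative_X_pow, eval_pow, eval_X, eval_C_mul] <;> push_cast <;> ring

theorem bdf4_operator_exact_on_quartics_general
    (p : Polynomial ℝ) (hp : p.degree ≤ 4) (k : ℝ) (t : ℝ) :
    25 * p.eval (t + k) - 48 * p.eval t + 36 * p.eval (t - k)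
        - 16 * p.eval (t - 2 * k) + 3 * p.eval (t - 3 * k)
      = 12 * k * p.derivative.eval (t + k) := by
  have hdeg : p.degree < (5 : ℕ) := hp.trans_lt (by norm_num)
  have hres := linearMap_eq_zero_of_degree_lt _ (fun i hi ↦ bdf4Residual_X_pow k t hi) hdeg
  rw [bdf4Residual_apply] at hres
  linarith

/-- The effective difference operator of the constant-step BDF3-TF algorithm
(the classical BDF4 operator) is exact on quartic polynomials. -/
theorem bdf4_operator_exact_on_quartics
    (p : Polynomial ℝ) (hp : p.degree ≤ 4) (k : ℝ) (hk : 0 < k) (t : ℝ) :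
    25 * p.eval (t + k) - 48 * p.eval t + 36 * p.eval (t - k)
        - 16 * p.eval (t - 2 * k) + 3 * p.eval (t - 3 * k)
      = 12 * k * p.derivative.eval (t + k) :=
  bdf4_operator_exact_on_quartics_general p hp k t
end
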